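/- arXiv:1309.0302 — 3 statements merged into one kernel-verified Lean document; each statement's English description precedes it below -/
import Mathlib

section
/- (Deterministic error bound for BRP.) Let X be an m×n real matrix (m ≥ n) with singular value decomposition X = UΛVᵀ = U₁Λ₁V₁ᵀ + U₂Λ₂V₂ᵀ, where Λ = diag(λ₁,…,λ_n) with λ₁ ≥ ⋯ ≥ λ_n ≥ 0, Λ₁ = diag(λ₁,…,λ_r) with λ_r > 0, Λ₂ = diag(λ_{r+1},…,λ_n), and U₁,V₁ (resp. U₂,V₂) are the corresponding columns of U,V. Fix a target rank r ≤ n−1, an oversampling parameter p ≥ 2, and an n×(r+p) real matrix A₁. Set B = XᵀXA₁ and assume BᵀB is invertible, and let L = X B (BᵀB)⁻¹ Bᵀ be the BRP low-rank approximation of X with updated projection matrices. Assume further that W := V₁ᵀA₁ satisfies WWᵀ invertible, and write W† = Wᵀ(WWᵀ)⁻¹ for its Moore–Penrose pseudoinverse. Then ‖X − L‖² ≤ ‖Λ₂² (V₂ᵀA₁) W† Λ₁⁻¹‖² + ‖Λ₂‖², where ‖·‖ is the spectral norm. -/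
open Matrix

noncomputable def specNorm {m n : Type*} [Fintype m] [Fintype n] [DecidableEq n]
    (A : Matrix m n ℝ) : ℝ :=
  ‖LinearMap.toContinuousLinearMap (Matrix.toEuclideanLin A)‖

noncomputable def sqN {k : Type*} [Fintype k] (v : k → ℝ) : ℝ := ∑ i, v i ^ 2

lemma sqN_nonneg {k : Type*} [Fintype k] (v : k → ℝ) : 0 ≤ sqN v :=
  Finset.sum_nonneg fun i _ => sq_nonneg _

lemma norm_symm_sq {k : Type*} [Fintype k] (v : k → ℝ) :
    ‖(WithLp.equiv 2 (k → ℝ)).symm v‖ ^ 2 = sqN v := by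
  rw [EuclideanSpace.norm_eq]
  rw [Real.sq_sqrt (by positivity)]
  simp [sqN, sq_abs]

lemma specNorm_nonneg {m n : Type*} [Fintype m] [Fintype n] [DecidableEq n]
    (A : Matrix m n ℝ) : 0 ≤ specNorm A := norm_nonneg _

lemma sqN_mulVec_le {m n : Type*} [Fintype m] [Fintype n] [DecidableEq n]
    (A : Matrix m n ℝ) (x : n → ℝ) :
    sqN (A.mulVec x) ≤ specNorm A ^ 2 * sqN x := by
  have h := (LinearMap.toContinuousLinearMap (Matrix.toEuclideanLin A)).le_opNorm
    ((WithLp.equiv 2 (n → ℝ)).symm x)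
  have h2 : (LinearMap.toContinuousLinearMap (Matrix.toEuclideanLin A))
      ((WithLp.equiv 2 (n → ℝ)).symm x) = (WithLp.equiv 2 (m → ℝ)).symm (A.mulVec x) := by
    simp [LinearMap.coe_toContinuousLinearMap']
  rw [h2] at h
  have := pow_le_pow_left₀ (norm_nonneg _) h 2
  rw [norm_symm_sq, mul_pow, norm_symm_sq] at this
  exact this.trans_eq rfl

lemma specNorm_le_of {m n : Type*} [Fintype m] [Fintype n] [DecidableEq n]
    (A : Matrix m n ℝ) (c : ℝ) (hc : 0 ≤ c)
    (h : ∀ x : n → ℝ, sqN (A.mulVec x) ≤ c ^ 2 * sqN x) : specNorm A ≤ c := by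
  apply ContinuousLinearMap.opNorm_le_bound _ hc
  intro x
  have h2 : (LinearMap.toContinuousLinearMap (Matrix.toEuclideanLin A)) x
      = (WithLp.equiv 2 (m → ℝ)).symm (A.mulVec ((WithLp.equiv 2 (n → ℝ)) x)) := by
    simp [LinearMap.coe_toContinuousLinearMap', Matrix.toEuclideanLin_apply]
  rw [h2]
  have hx : ((WithLp.equiv 2 (n → ℝ)).symm ((WithLp.equiv 2 (n → ℝ)) x)) = x := by simp
  have := h ((WithLp.equiv 2 (n → ℝ)) x)
  rw [← norm_symm_sq, ← norm_symm_sq, hx, ← mul_pow] at this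
  exact (pow_le_pow_iff_left₀ (norm_nonneg _) (by positivity) (by norm_num)).mp this

lemma sqN_eq_dot {k : Type*} [Fintype k] (v : k → ℝ) : sqN v = v ⬝ᵥ v := by
  simp [sqN, dotProduct, sq]

lemma sqN_mulVec_eq_dot {m n : Type*} [Fintype m] [Fintype n]
    (A : Matrix m n ℝ) (x : n → ℝ) :
    sqN (A.mulVec x) = x ⬝ᵥ (Aᵀ * A).mulVec x := by
  rw [sqN_eq_dot, ← Matrix.mulVec_mulVec, Matrix.dotProduct_mulVec x,
    Matrix.vecMul_transpose]

lemma sqN_mulVec_isometry {m n : Type*} [Fintype m] [Fintype n] [DecidableEq n]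
    {U : Matrix m n ℝ} (hU : Uᵀ * U = 1) (y : n → ℝ) :
    sqN (U.mulVec y) = sqN y := by
  rw [sqN_mulVec_eq_dot, hU, Matrix.one_mulVec, sqN_eq_dot]

lemma specNorm_mul_left_isometry {m n k : Type*} [Fintype m] [Fintype n] [Fintype k]
    [DecidableEq n] [DecidableEq k]
    {U : Matrix m n ℝ} (hU : Uᵀ * U = 1) (M : Matrix n k ℝ) :
    specNorm (U * M) = specNorm M := by
  apply le_antisymm
  · apply specNorm_le_of _ _ (specNorm_nonneg M)
    intro x
    rw [← Matrix.mulVec_mulVec, sqN_mulVec_isometry hU]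
    exact sqN_mulVec_le M x
  · apply specNorm_le_of _ _ (specNorm_nonneg _)
    intro x
    rw [← sqN_mulVec_isometry hU (M.mulVec x), Matrix.mulVec_mulVec]
    exact sqN_mulVec_le _ x

lemma specNorm_mul_right_orth_le {m n : Type*} [Fintype m] [Fintype n]
    [DecidableEq n] {O : Matrix n n ℝ} (hO : Oᵀ * O = 1) (M : Matrix m n ℝ) :
    specNorm (M * O) ≤ specNorm M := by
  apply specNorm_le_of _ _ (specNorm_nonneg M)
  intro x
  rw [← Matrix.mulVec_mulVec]
  calc sqN (M.mulVec (O.mulVec x)) ≤ specNorm M ^ 2 * sqN (O.mulVec x) := sqN_mulVec_le _ _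
    _ = specNorm M ^ 2 * sqN x := by rw [sqN_mulVec_isometry hO]

lemma specNorm_mul_right_orth {m n : Type*} [Fintype m] [Fintype n]
    [DecidableEq n] {O : Matrix n n ℝ} (hO : Oᵀ * O = 1) (hO' : O * Oᵀ = 1)
    (M : Matrix m n ℝ) : specNorm (M * O) = specNorm M := by
  refine le_antisymm (specNorm_mul_right_orth_le hO M) ?_
  have : M = M * O * Oᵀ := by rw [Matrix.mul_assoc, hO', Matrix.mul_one]
  calc specNorm M = specNorm (M * O * Oᵀ) := by rw [← this]
    _ ≤ specNorm (M * O) := specNorm_mul_right_orth_le (by rwa [Matrix.transpose_transpose]) _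

lemma dot_le_sqrt {k : Type*} [Fintype k] (v w : k → ℝ) :
    v ⬝ᵥ w ≤ Real.sqrt (sqN v) * Real.sqrt (sqN w) := by
  have h := Finset.sum_mul_sq_le_sq_mul_sq Finset.univ v w
  have h2 : v ⬝ᵥ w ≤ |∑ i, v i * w i| := le_abs_self _
  calc v ⬝ᵥ w ≤ |∑ i, v i * w i| := h2
    _ = Real.sqrt ((∑ i, v i * w i)^2) := by rw [Real.sqrt_sq_eq_abs]
    _ ≤ Real.sqrt (sqN v * sqN w) := Real.sqrt_le_sqrt (by simpa [sqN] using h)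
    _ = Real.sqrt (sqN v) * Real.sqrt (sqN w) := Real.sqrt_mul (sqN_nonneg v) _

lemma specNorm_transpose_le {m n : Type*} [Fintype m] [Fintype n]
    [DecidableEq m] [DecidableEq n] (B : Matrix m n ℝ) :
    specNorm Bᵀ ≤ specNorm B := by
  apply specNorm_le_of _ _ (specNorm_nonneg B)
  intro x
  set y := Bᵀ.mulVec x with hy
  have h1 : sqN y = x ⬝ᵥ B.mulVec y := by
    rw [sqN_eq_dot, hy, Matrix.mulVec_transpose, ← Matrix.dotProduct_mulVec]
  have h2 : x ⬝ᵥ B.mulVec y ≤ Real.sqrt (sqN x) * Real.sqrt (sqN (B.mulVec y)) :=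
    dot_le_sqrt _ _
  have h3 : sqN (B.mulVec y) ≤ specNorm B ^ 2 * sqN y := sqN_mulVec_le _ _
  have h4 : Real.sqrt (sqN (B.mulVec y)) ≤ specNorm B * Real.sqrt (sqN y) := by
    calc Real.sqrt (sqN (B.mulVec y)) ≤ Real.sqrt (specNorm B ^ 2 * sqN y) :=
          Real.sqrt_le_sqrt h3
      _ = specNorm B * Real.sqrt (sqN y) := by
          rw [Real.sqrt_mul (by positivity), Real.sqrt_sq (specNorm_nonneg B)]
  have h5 : sqN y ≤ Real.sqrt (sqN x) * (specNorm B * Real.sqrt (sqN y)) := by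
    calc sqN y = x ⬝ᵥ B.mulVec y := h1
      _ ≤ Real.sqrt (sqN x) * Real.sqrt (sqN (B.mulVec y)) := h2
      _ ≤ Real.sqrt (sqN x) * (specNorm B * Real.sqrt (sqN y)) := by
          apply mul_le_mul_of_nonneg_left h4 (Real.sqrt_nonneg _)
  have hsy : Real.sqrt (sqN y) ^ 2 = sqN y := Real.sq_sqrt (sqN_nonneg y)
  have hsx : Real.sqrt (sqN x) ^ 2 = sqN x := Real.sq_sqrt (sqN_nonneg x)
  nlinarith [Real.sqrt_nonneg (sqN y), Real.sqrt_nonneg (sqN x), specNorm_nonneg B,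
    sq_nonneg (Real.sqrt (sqN y) - specNorm B * Real.sqrt (sqN x))]

lemma specNorm_transpose {m n : Type*} [Fintype m] [Fintype n]
    [DecidableEq m] [DecidableEq n] (A : Matrix m n ℝ) :
    specNorm Aᵀ = specNorm A :=
  le_antisymm (specNorm_transpose_le A) (by simpa using specNorm_transpose_le Aᵀ)

lemma sum_split {n r : ℕ}
    (e₁ : Fin r → Fin n) (e₂ : Fin (n - r) → Fin n)
    (he₁ : ∀ i, (e₁ i : ℕ) = (i : ℕ)) (he₂ : ∀ i, (e₂ i : ℕ) = r + (i : ℕ))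
    (hr : r ≤ n)
    (f : Fin n → ℝ) :
    ∑ i, f i = (∑ i, f (e₁ i)) + ∑ i, f (e₂ i) := by
  have hbij : Function.Bijective (Sum.elim e₁ e₂) := by
    rw [Fintype.bijective_iff_injective_and_card]
    constructor
    · rintro (a | a) (b | b) hab <;>
        simp only [Sum.elim_inl, Sum.elim_inr] at hab <;>
        have hab' := congrArg Fin.val hab
      · rw [he₁, he₁] at hab'
        simp [Fin.ext_iff, hab']
      · rw [he₁, he₂] at hab'
        have := a.2; omega
      · rw [he₂, he₁] at hab'
        have := b.2; omega
      · rw [he₂, he₂] at hab'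
        simp only [Sum.inr.injEq, Fin.ext_iff]
        omega
    · simp only [Fintype.card_sum, Fintype.card_fin]
      omega
  have := Fintype.sum_bijective _ hbij (fun x => f (Sum.elim e₁ e₂ x)) f (fun x => rfl)
  rw [← this, Fintype.sum_sum_type]
  rfl

lemma key_estimate {n r q : ℕ} (hr : r ≤ n)
    (lam : Fin n → ℝ)
    (e₁ : Fin r → Fin n) (e₂ : Fin (n - r) → Fin n)
    (he₁ : ∀ i, (e₁ i : ℕ) = (i : ℕ)) (he₂ : ∀ i, (e₂ i : ℕ) = r + (i : ℕ))
    (Y : Matrix (Fin n) (Fin q) ℝ) (hYinv : IsUnit (Yᵀ * Y))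
    (F : Matrix (Fin (n - r)) (Fin r) ℝ)
    (C : Matrix (Fin q) (Fin r) ℝ)
    (hZ1 : ∀ i j, (Y * C) (e₁ i) j = Matrix.diagonal (fun i => lam (e₁ i)) i j)
    (hZ2 : ∀ i j, (Y * C) (e₂ i) j = F i j) :
    specNorm (Matrix.diagonal lam * (1 - Y * (Yᵀ * Y)⁻¹ * Yᵀ)) ^ 2 ≤
      specNorm F ^ 2 + specNorm (Matrix.diagonal fun i => lam (e₂ i)) ^ 2 := by
  have ha0 : 0 ≤ specNorm F := specNorm_nonneg _
  have hb0 : 0 ≤ specNorm (Matrix.diagonal fun i => lam (e₂ i)) := specNorm_nonneg _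
  set P := Y * (Yᵀ * Y)⁻¹ * Yᵀ with hP
  have hdet : IsUnit (Yᵀ * Y).det := (Matrix.isUnit_iff_isUnit_det _).mp hYinv
  have hYtP : Yᵀ * (1 - P) = 0 := by
    rw [Matrix.mul_sub, Matrix.mul_one, hP, Matrix.mul_assoc Y _ Yᵀ,
      ← Matrix.mul_assoc Yᵀ Y _, ← Matrix.mul_assoc (Yᵀ * Y) _ Yᵀ,
      Matrix.mul_nonsing_inv _ hdet, Matrix.one_mul, sub_self]
  have hPt : Pᵀ = P := by
    rw [hP, Matrix.transpose_mul, Matrix.transpose_mul, Matrix.transpose_transpose,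
      Matrix.transpose_nonsing_inv, Matrix.transpose_mul, Matrix.transpose_transpose,
      Matrix.mul_assoc]
  have hPP : P * P = P := by
    rw [hP]
    rw [Matrix.mul_assoc (Y * (Yᵀ * Y)⁻¹) Yᵀ (Y * (Yᵀ * Y)⁻¹ * Yᵀ),
      ← Matrix.mul_assoc Yᵀ (Y * (Yᵀ * Y)⁻¹) Yᵀ, ← Matrix.mul_assoc Yᵀ Y (Yᵀ * Y)⁻¹,
      Matrix.mul_nonsing_inv _ hdet, Matrix.one_mul]
  have h1mP : (1 - P)ᵀ * (1 - P) = 1 - P := by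
    rw [Matrix.transpose_sub, Matrix.transpose_one, hPt, Matrix.sub_mul, Matrix.mul_sub,
      Matrix.mul_sub, Matrix.one_mul, Matrix.mul_one, hPP]
    simp only [Matrix.one_mul, ← hP]
    abel
  have hcontr : ∀ x : Fin n → ℝ, sqN ((1 - P).mulVec x) ≤ sqN x := by
    intro x
    have hd : sqN ((1 - P).mulVec x) = x ⬝ᵥ x - x ⬝ᵥ P.mulVec x := by
      rw [sqN_mulVec_eq_dot, h1mP, Matrix.sub_mulVec, Matrix.one_mulVec,
        dotProduct_sub]
    have hPx : x ⬝ᵥ P.mulVec x = sqN (P.mulVec x) := by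
      rw [sqN_mulVec_eq_dot, hPt, hPP]
    rw [hd, hPx, ← sqN_eq_dot]
    have := sqN_nonneg (P.mulVec x)
    linarith
  have hmain : specNorm (Matrix.diagonal lam * (1 - P)) ≤
      Real.sqrt (specNorm F ^ 2 + specNorm (Matrix.diagonal fun i => lam (e₂ i)) ^ 2) := by
    apply specNorm_le_of _ _ (Real.sqrt_nonneg _)
    intro x
    rw [Real.sq_sqrt (by positivity)]
    set w := (1 - P).mulVec x with hw
    have hw0 : (Y * C)ᵀ.mulVec w = 0 := by
      have hzero : (Y * C)ᵀ * (1 - P) = 0 := by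
        rw [Matrix.transpose_mul, Matrix.mul_assoc, hYtP, Matrix.mul_zero]
      rw [hw, Matrix.mulVec_mulVec, hzero, Matrix.zero_mulVec]
    set w₂ : Fin (n - r) → ℝ := fun i => w (e₂ i) with hw₂def
    have hcon : ∀ j : Fin r, lam (e₁ j) * w (e₁ j) = -(Fᵀ.mulVec w₂ j) := by
      intro j
      have h0 : ∑ i, (Y * C) i j * w i = 0 := by
        have := congrFun hw0 j
        simpa [Matrix.mulVec, dotProduct, Matrix.transpose_apply] using this
      rw [sum_split e₁ e₂ he₁ he₂ hr (fun i => (Y * C) i j * w i)] at h0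
      simp only [hZ1, hZ2] at h0
      have hfst : ∑ i, Matrix.diagonal (fun i => lam (e₁ i)) i j * w (e₁ i)
          = lam (e₁ j) * w (e₁ j) := by
        simp [Matrix.diagonal_apply, ite_mul]
      have hsnd : ∑ i, F i j * w (e₂ i) = Fᵀ.mulVec w₂ j := by
        simp [Matrix.mulVec, dotProduct, Matrix.transpose_apply, hw₂def]
      rw [hfst, hsnd] at h0
      linarith
    have hle2 : sqN w₂ ≤ sqN x := by
      have hsp := sum_split e₁ e₂ he₁ he₂ hr (fun i => w i ^ 2)
      have h2 : (0:ℝ) ≤ ∑ i : Fin r, w (e₁ i) ^ 2 :=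
        Finset.sum_nonneg fun _ _ => sq_nonneg _
      have h3 : sqN w₂ ≤ sqN w := by
        simp only [sqN] at hsp ⊢
        linarith
      exact h3.trans (hcontr x)
    calc sqN ((Matrix.diagonal lam * (1 - P)).mulVec x)
        = sqN (Matrix.diagonal lam *ᵥ w) := by rw [← Matrix.mulVec_mulVec, hw]
      _ = ∑ i, (lam i * w i) ^ 2 := by simp [sqN, Matrix.mulVec_diagonal]
      _ = (∑ i : Fin r, (lam (e₁ i) * w (e₁ i)) ^ 2)
            + ∑ i : Fin (n - r), (lam (e₂ i) * w (e₂ i)) ^ 2 :=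
          sum_split e₁ e₂ he₁ he₂ hr _
      _ = sqN (Fᵀ.mulVec w₂) + sqN ((Matrix.diagonal fun i => lam (e₂ i)).mulVec w₂) := by
          congr 1
          · simp only [hcon]
            simp [sqN]
          · simp [sqN, Matrix.mulVec_diagonal, hw₂def]
      _ ≤ specNorm F ^ 2 * sqN w₂
            + specNorm (Matrix.diagonal fun i => lam (e₂ i)) ^ 2 * sqN w₂ := by
          have h1 := sqN_mulVec_le Fᵀ w₂
          rw [specNorm_transpose] at h1
          exact add_le_add h1 (sqN_mulVec_le _ _)
      _ ≤ (specNorm F ^ 2 + specNorm (Matrix.diagonal fun i => lam (e₂ i)) ^ 2) * sqN x := by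
          nlinarith [sqN_nonneg w₂, sqN_nonneg x]
  have hfin := pow_le_pow_left₀ (specNorm_nonneg _) hmain 2
  rwa [Real.sq_sqrt (by positivity)] at hfin

/-- deterministic spectral-norm error bound for the BRP low-rank
approximation with updated projection matrices. -/
theorem brp_deterministic_error_bound {m n r p : ℕ}
    (hmn : n ≤ m) (hr : r + 1 ≤ n) (hp : 2 ≤ p)
    (X : Matrix (Fin m) (Fin n) ℝ)
    (U : Matrix (Fin m) (Fin n) ℝ) (V : Matrix (Fin n) (Fin n) ℝ)
    (lam : Fin n → ℝ)
    (hU : Uᵀ * U = 1) (hV : Vᵀ * V = 1)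
    (hsort : ∀ i j : Fin n, i ≤ j → lam j ≤ lam i)
    (hnn : ∀ i : Fin n, 0 ≤ lam i)
    (hpos : ∀ i : Fin n, (i : ℕ) < r → 0 < lam i)
    (hX : X = U * Matrix.diagonal lam * Vᵀ)
    (A₁ : Matrix (Fin n) (Fin (r + p)) ℝ)
    (B : Matrix (Fin n) (Fin (r + p)) ℝ) (hB : B = Xᵀ * X * A₁)
    (hBinv : IsUnit (Bᵀ * B))
    (L : Matrix (Fin m) (Fin n) ℝ) (hL : L = X * B * (Bᵀ * B)⁻¹ * Bᵀ)
    (W : Matrix (Fin r) (Fin (r + p)) ℝ)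
    (hW : W = (V.submatrix id (fun i : Fin r => Fin.castLE (by omega) i))ᵀ * A₁)
    (hWinv : IsUnit (W * Wᵀ)) :
    specNorm (X - L) ^ 2 ≤
      specNorm
        ((Matrix.diagonal fun i : Fin (n - r) =>
            lam ⟨r + i.1, by have := i.2; omega⟩) ^ 2 *
          ((V.submatrix id (fun i : Fin (n - r) =>
              (⟨r + i.1, by have := i.2; omega⟩ : Fin n)))ᵀ * A₁) *
          (Wᵀ * (W * Wᵀ)⁻¹) *
          (Matrix.diagonal fun i : Fin r => lam (Fin.castLE (by omega) i))⁻¹) ^ 2 +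
      specNorm (Matrix.diagonal fun i : Fin (n - r) =>
        lam ⟨r + i.1, by have := i.2; omega⟩) ^ 2 := by
  have hrn : r ≤ n := by omega
  have hVVt : V * Vᵀ = 1 := mul_eq_one_comm.mp hV
  set e₁ : Fin r → Fin n := fun i => Fin.castLE (by omega : r ≤ n) i with he₁def
  set e₂ : Fin (n - r) → Fin n :=
    fun i => (⟨r + i.1, by have := i.2; omega⟩ : Fin n) with he₂def
  have he₁ : ∀ i : Fin r, ((e₁ i : Fin n) : ℕ) = (i : ℕ) := fun i => rfl
  have he₂ : ∀ i : Fin (n - r), ((e₂ i : Fin n) : ℕ) = r + (i : ℕ) := fun i => rfl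
  set Lam : Matrix (Fin n) (Fin n) ℝ := Matrix.diagonal lam with hLam
  set Ω : Matrix (Fin n) (Fin (r + p)) ℝ := Vᵀ * A₁ with hΩ
  set Y : Matrix (Fin n) (Fin (r + p)) ℝ := Lam * (Lam * Ω) with hY
  set Lam₁ : Matrix (Fin r) (Fin r) ℝ :=
    Matrix.diagonal (fun i : Fin r => lam (e₁ i)) with hLam₁
  set C : Matrix (Fin (r + p)) (Fin r) ℝ := Wᵀ * ((W * Wᵀ)⁻¹ * Lam₁⁻¹) with hC
  -- B = V * Y
  have hXt : Xᵀ = V * (Lam * Uᵀ) := by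
    rw [hX]
    simp [Matrix.transpose_mul, Matrix.diagonal_transpose, Matrix.mul_assoc]
    rw [hLam, Matrix.diagonal_transpose]
  have hBY : B = V * Y := by
    rw [hB, hXt, hX]
    simp only [Matrix.mul_assoc]
    rw [← Matrix.mul_assoc Uᵀ U, hU, Matrix.one_mul]
  have hBtB : Bᵀ * B = Yᵀ * Y := by
    rw [hBY, Matrix.transpose_mul, Matrix.mul_assoc, ← Matrix.mul_assoc Vᵀ V Y, hV,
      Matrix.one_mul]
  have hYinv : IsUnit (Yᵀ * Y) := by rwa [hBtB] at hBinv
  -- X - L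
  have hXL : X - L = U * (Lam * (1 - Y * (Yᵀ * Y)⁻¹ * Yᵀ) * Vᵀ) := by
    rw [hL, hBtB, hBY, hX]
    simp only [Matrix.transpose_mul, Matrix.mul_sub, Matrix.sub_mul, Matrix.mul_one,
      Matrix.one_mul, Matrix.mul_assoc]
    rw [← Matrix.mul_assoc Vᵀ V, hV, Matrix.one_mul]
  have hspec : specNorm (X - L) =
      specNorm (Lam * (1 - Y * (Yᵀ * Y)⁻¹ * Yᵀ)) := by
    rw [hXL, specNorm_mul_left_isometry hU]
    exact specNorm_mul_right_orth
      (by rwa [Matrix.transpose_transpose]) hV _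
  -- blocks
  have hdetW : IsUnit (W * Wᵀ).det := (Matrix.isUnit_iff_isUnit_det _).mp hWinv
  have hdetLam₁ : IsUnit Lam₁.det := by
    rw [hLam₁, Matrix.det_diagonal]
    refine isUnit_iff_ne_zero.mpr (ne_of_gt ?_)
    exact Finset.prod_pos fun i _ => hpos (e₁ i) (by rw [he₁ i]; exact i.2)
  have hWC : W * C = Lam₁⁻¹ := by
    rw [hC, ← Matrix.mul_assoc, ← Matrix.mul_assoc, Matrix.mul_nonsing_inv _ hdetW,
      Matrix.one_mul]
  have hLam₁inv : Lam₁ * (Lam₁ * Lam₁⁻¹) = Lam₁ := by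
    rw [Matrix.mul_nonsing_inv _ hdetLam₁, Matrix.mul_one]
  have hWrow : ∀ (i : Fin r) (k : Fin (r + p)), W i k = Ω (e₁ i) k := by
    intro i k
    rw [hW, hΩ]
    simp [Matrix.mul_apply]
  have hYC : Y * C = Lam * (Lam * (Ω * C)) := by
    rw [hY]; simp only [Matrix.mul_assoc]
  have hΩC₁ : ∀ (i : Fin r) (j : Fin r), (Ω * C) (e₁ i) j = (W * C) i j := by
    intro i j
    simp only [Matrix.mul_apply]
    exact Finset.sum_congr rfl fun k _ => by rw [hWrow i k]
  have hZ1 : ∀ i j, (Y * C) (e₁ i) j = Matrix.diagonal (fun i => lam (e₁ i)) i j := by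
    intro i j
    rw [hYC]
    rw [show (Lam * (Lam * (Ω * C))) (e₁ i) j
        = lam (e₁ i) * (lam (e₁ i) * ((Ω * C) (e₁ i) j)) by
      simp [hLam, Matrix.diagonal_mul]]
    rw [hΩC₁ i j, hWC]
    have := congrFun (congrFun hLam₁inv i) j
    rw [show (Lam₁ * (Lam₁ * Lam₁⁻¹)) i j
        = lam (e₁ i) * (lam (e₁ i) * (Lam₁⁻¹ i j)) by
      simp [hLam₁, Matrix.diagonal_mul]] at this
    rw [this, hLam₁]
  -- bottom block
  have hΩ₂mat : (V.submatrix id e₂)ᵀ * A₁ = Ω.submatrix e₂ id := by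
    ext i k
    simp [Matrix.mul_apply, hΩ]
  have hΩC₂ : ∀ (i : Fin (n - r)) (j : Fin r),
      (Ω * C) (e₂ i) j = ((Ω.submatrix e₂ id) * C) i j := by
    intro i j
    simp [Matrix.mul_apply]
  have hF : (Matrix.diagonal fun i : Fin (n - r) => lam (e₂ i)) ^ 2 *
          ((V.submatrix id e₂)ᵀ * A₁) * (Wᵀ * (W * Wᵀ)⁻¹) * Lam₁⁻¹
      = (Matrix.diagonal fun i : Fin (n - r) => lam (e₂ i)) *
        ((Matrix.diagonal fun i : Fin (n - r) => lam (e₂ i)) *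
          ((Ω.submatrix e₂ id) * C)) := by
    rw [hΩ₂mat, sq, hC]
    simp only [Matrix.mul_assoc]
  have hZ2 : ∀ (i : Fin (n - r)) (j : Fin r), (Y * C) (e₂ i) j =
      (((Matrix.diagonal fun i : Fin (n - r) => lam (e₂ i)) ^ 2 *
        ((V.submatrix id e₂)ᵀ * A₁) * (Wᵀ * (W * Wᵀ)⁻¹) * Lam₁⁻¹ :
        Matrix (Fin (n - r)) (Fin r) ℝ)) i j := by
    intro i j
    rw [hYC, hF]
    rw [show (Lam * (Lam * (Ω * C))) (e₂ i) j
        = lam (e₂ i) * (lam (e₂ i) * ((Ω * C) (e₂ i) j)) by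
      simp [hLam, Matrix.diagonal_mul]]
    rw [hΩC₂ i j]
    simp [Matrix.diagonal_mul]
  rw [hspec]
  exact key_estimate hrn lam e₁ e₂ he₁ he₂ Y hYinv _ C hZ1 hZ2
end

section
/- (Deterministic error bound, power scheme.) Let X be an m×n real matrix (m ≥ n) with singular value decomposition X = UΛVᵀ = U₁Λ₁V₁ᵀ + U₂Λ₂V₂ᵀ, where Λ = diag(λ₁,…,λ_n) with λ₁ ≥ ⋯ ≥ λ_n ≥ 0, Λ₁ = diag(λ₁,…,λ_r) with λ_r > 0, Λ₂ = diag(λ_{r+1},…,λ_n), and U₁,V₁ (resp. U₂,V₂) are the corresponding columns of U,V. Fix a target rank r ≤ n−1, an oversampling parameter p ≥ 2, an integer q ≥ 0, and an n×(r+p) real matrix A₁. Set B = (XᵀX)^{2q+1} A₁, assume BᵀB is invertible, and let L = X B (BᵀB)⁻¹ Bᵀ be the power-scheme BRP approximation of X. Assume W := V₁ᵀA₁ satisfies WWᵀ invertible, and write W† = Wᵀ(WWᵀ)⁻¹. Then ‖X − L‖² ≤ ( ‖Λ₂^{2(2q+1)} (V₂ᵀA₁) W† Λ₁^{−(2q+1)}‖²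 + ‖Λ₂^{2q+1}‖² )^{1/(2q+1)}, where ‖·‖ is the spectral norm. -/
/-!
Write `N = 2q + 1`, `P = B (BᵀB)⁻¹ Bᵀ` and `R = ‖F‖² + ‖Λ₂^N‖²`, where `F` is the matrix in the
bound. As `P` is an orthogonal projection, `X - L = X (1 - P)` with `1 - P` a contraction into
`ker Bᵀ`, so it suffices to show `‖X w‖^(2N) ≤ R ‖w‖^(2N)` whenever `Bᵀ w = 0`.
In the coordinates `y = Vᵀ w` that constraint reads `(Vᵀ A₁)ᵀ Λ^(2N) y = 0`; solving its first block
through the right inverse `Wᵀ (W Wᵀ)⁻¹` gives `Λ₁^N y₁ = -Fᵀ y₂`, hence `‖Λ^N y‖² ≤ R ‖y‖²`.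
Jensen's inequality for `t ↦ t^N` with weights `y_i²` then gives
`‖X w‖^(2N) = (∑ λ_i² y_i²)^N ≤ ‖y‖^(2(N-1)) ‖Λ^N y‖²`.
-/

open Matrix

open scoped Matrix.Norms.L2Operator

namespace Real

lemma pow_sum_mul_le_sum_pow_mul_sum_mul_pow {ι : Type*} (s : Finset ι) {w z : ι → ℝ}
    (hw : ∀ i ∈ s, 0 ≤ w i) (hz : ∀ i ∈ s, 0 ≤ z i) (j : ℕ) :
    (∑ i ∈ s, w i * z i) ^ (j + 1) ≤ (∑ i ∈ s, w i) ^ j * ∑ i ∈ s, w i * z i ^ (j + 1) := by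
  rcases (Finset.sum_nonneg hw).eq_or_lt with hS | hS
  · have hw0 : ∀ i ∈ s, w i = 0 := (Finset.sum_eq_zero_iff_of_nonneg hw).mp hS.symm
    have h1 : ∑ i ∈ s, w i * z i = 0 := Finset.sum_eq_zero fun i hi => by rw [hw0 i hi, zero_mul]
    have h2 : ∑ i ∈ s, w i * z i ^ (j + 1) = 0 :=
      Finset.sum_eq_zero fun i hi => by rw [hw0 i hi, zero_mul]
    simp [h1, h2]
  have hmean := pow_arith_mean_le_arith_mean_pow s (fun i => w i / ∑ i ∈ s, w i) z
    (fun i hi => div_nonneg (hw i hi) hS.le) (by rw [← Finset.sum_div, div_self hS.ne']) hz (j + 1)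
  simp only [div_mul_eq_mul_div, ← Finset.sum_div, div_pow] at hmean
  rw [div_le_div_iff₀ (by positivity) hS] at hmean
  refine le_of_mul_le_mul_right (hmean.trans_eq ?_) hS
  ring

lemma le_rpow_one_div_mul_of_pow_le {a b c : ℝ} (ha : 0 ≤ a) (hb : 0 ≤ b) (hc : 0 ≤ c) {j : ℕ}
    (h : a ^ (j + 1) ≤ c * b ^ (j + 1)) : a ≤ c ^ ((1 : ℝ) / (j + 1)) * b := by
  have hj : (0 : ℝ) < j + 1 := by positivity
  have hroot (x : ℝ) (hx : 0 ≤ x) : (x ^ (j + 1)) ^ ((1 : ℝ) / (j + 1)) = x := by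
    rw [← Real.rpow_natCast, ← Real.rpow_mul hx]
    push_cast
    rw [mul_one_div_cancel hj.ne', Real.rpow_one]
  calc a = (a ^ (j + 1)) ^ ((1 : ℝ) / (j + 1)) := (hroot a ha).symm
    _ ≤ (c * b ^ (j + 1)) ^ ((1 : ℝ) / (j + 1)) := by gcongr
    _ = c ^ ((1 : ℝ) / (j + 1)) * b := by rw [Real.mul_rpow hc (by positivity), hroot b hb]

end Real

namespace Matrix

section DotProduct

variable {ι ι₁ ι₂ m κ : Type*} [Fintype ι] [Fintype ι₁] [Fintype ι₂] [Fintype m] [Fintype κ]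

lemma dotProduct_eq_add_of_sumEquiv {α : Type*} [NonUnitalNonAssocSemiring α]
    (e : ι₁ ⊕ ι₂ ≃ ι) (u v : ι → α) :
    u ⬝ᵥ v = (fun i => u (e (.inl i))) ⬝ᵥ (fun i => v (e (.inl i))) +
      (fun i => u (e (.inr i))) ⬝ᵥ (fun i => v (e (.inr i))) := by
  simp only [dotProduct, ← e.sum_comp, Fintype.sum_sum_type]

omit [Fintype κ] in
lemma vecMul_eq_add_of_sumEquiv {α : Type*} [NonUnitalNonAssocSemiring α]
    (e : ι₁ ⊕ ι₂ ≃ ι) (v : ι → α) (A : Matrix ι κ α) :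
    v ᵥ* A = (fun i => v (e (.inl i))) ᵥ* A.submatrix (fun i => e (.inl i)) id +
      (fun i => v (e (.inr i))) ᵥ* A.submatrix (fun i => e (.inr i)) id := by
  ext j
  exact dotProduct_eq_add_of_sumEquiv e v (fun i => A i j)

lemma mulVec_dotProduct_mulVec_of_transpose_mul_self_eq_one {α : Type*} [CommSemiring α]
    [DecidableEq ι] {U : Matrix m ι α} (hU : Uᵀ * U = 1) (v : ι → α) :
    (U *ᵥ v) ⬝ᵥ (U *ᵥ v) = v ⬝ᵥ v := by
  rw [dotProduct_mulVec, vecMul_mulVec, hU, vecMul_one]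

lemma diagonal_mulVec_eq_mul {α : Type*} [NonUnitalNonAssocSemiring α] [DecidableEq ι]
    (d v : ι → α) : diagonal d *ᵥ v = d * v :=
  funext (mulVec_diagonal d v)

lemma vecMul_diagonal_eq_mul {α : Type*} [NonUnitalNonAssocSemiring α] [DecidableEq ι]
    (v d : ι → α) : v ᵥ* diagonal d = v * d :=
  funext (vecMul_diagonal v d)

lemma dotProduct_self_nonneg (v : ι → ℝ) : 0 ≤ v ⬝ᵥ v := by
  simpa using dotProduct_star_self_nonneg v

lemma pow_dotProduct_mul_self_le (d y : ι → ℝ) (j : ℕ) :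
    ((d * y) ⬝ᵥ (d * y)) ^ (j + 1) ≤ (y ⬝ᵥ y) ^ j * ((d ^ (j + 1) * y) ⬝ᵥ (d ^ (j + 1) * y)) := by
  have h1 : (d * y) ⬝ᵥ (d * y) = ∑ i, y i ^ 2 * d i ^ 2 :=
    Finset.sum_congr rfl fun i _ => by simp only [Pi.mul_apply]; ring
  have h2 : y ⬝ᵥ y = ∑ i, y i ^ 2 := Finset.sum_congr rfl fun i _ => (sq (y i)).symm
  have h3 : (d ^ (j + 1) * y) ⬝ᵥ (d ^ (j + 1) * y) = ∑ i, y i ^ 2 * (d i ^ 2) ^ (j + 1) :=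
    Finset.sum_congr rfl fun i _ => by simp only [Pi.mul_apply, Pi.pow_apply]; ring
  rw [h1, h2, h3]
  exact Real.pow_sum_mul_le_sum_pow_mul_sum_mul_pow _ (fun i _ => sq_nonneg _)
    (fun i _ => sq_nonneg _) j

end DotProduct

section L2OpNorm

variable {m n : Type*} [Fintype m] [Fintype n]

lemma dotProduct_self_eq_norm_sq (v : n → ℝ) :
    v ⬝ᵥ v = ‖(EuclideanSpace.equiv n ℝ).symm v‖ ^ 2 := by
  rw [EuclideanSpace.real_norm_sq_eq]; simp [dotProduct, sq]

lemma mulVec_dotProduct_mulVec_le [DecidableEq n] (A : Matrix m n ℝ) (v : n → ℝ) :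
    (A *ᵥ v) ⬝ᵥ (A *ᵥ v) ≤ ‖A‖ ^ 2 * (v ⬝ᵥ v) := by
  rw [dotProduct_self_eq_norm_sq, dotProduct_self_eq_norm_sq, ← mul_pow]
  gcongr
  exact l2_opNorm_mulVec A _

lemma vecMul_dotProduct_vecMul_le [DecidableEq m] [DecidableEq n] (A : Matrix m n ℝ) (v : m → ℝ) :
    (v ᵥ* A) ⬝ᵥ (v ᵥ* A) ≤ ‖A‖ ^ 2 * (v ⬝ᵥ v) := by
  simpa [← mulVec_transpose, ← conjTranspose_eq_transpose_of_trivial, l2_opNorm_conjTranspose]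
    using mulVec_dotProduct_mulVec_le Aᵀ v

lemma l2_opNorm_sq_le_of_forall [DecidableEq n] {A : Matrix m n ℝ} {c : ℝ} (hc : 0 ≤ c)
    (h : ∀ v, (A *ᵥ v) ⬝ᵥ (A *ᵥ v) ≤ c * (v ⬝ᵥ v)) : ‖A‖ ^ 2 ≤ c := by
  suffices ‖A‖ ≤ √c by simpa [Real.sq_sqrt hc] using pow_le_pow_left₀ (norm_nonneg A) this 2
  rw [l2_opNorm_def]
  refine ContinuousLinearMap.opNorm_le_bound _ (Real.sqrt_nonneg c) fun x => ?_
  have hx := h x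
  rw [dotProduct_self_eq_norm_sq, dotProduct_self_eq_norm_sq] at hx
  rw [← Real.sqrt_sq (norm_nonneg _), ← Real.sqrt_sq (norm_nonneg x), ← Real.sqrt_mul hc]
  exact Real.sqrt_le_sqrt (by simpa [toLpLin_apply] using hx)

end L2OpNorm

section Projection

variable {n k : Type*} [Fintype n] [Fintype k] [DecidableEq k]

lemma isStarProjection_mul_inv_mul_transpose {B : Matrix n k ℝ} (hB : IsUnit (Bᵀ * B)) :
    IsStarProjection (B * (Bᵀ * B)⁻¹ * Bᵀ) := by
  have hdet : IsUnit (Bᵀ * B).det := (isUnit_iff_isUnit_det _).mp hB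
  constructor
  · change _ * _ = _
    calc B * (Bᵀ * B)⁻¹ * Bᵀ * (B * (Bᵀ * B)⁻¹ * Bᵀ)
        = B * ((Bᵀ * B)⁻¹ * (Bᵀ * B) * (Bᵀ * B)⁻¹) * Bᵀ := by simp only [Matrix.mul_assoc]
      _ = B * (Bᵀ * B)⁻¹ * Bᵀ := by rw [nonsing_inv_mul _ hdet, Matrix.one_mul, Matrix.mul_assoc]
  · simp [IsSelfAdjoint, star_eq_conjTranspose, transpose_nonsing_inv, Matrix.mul_assoc]

lemma transpose_mul_one_sub_mul_inv_mul_transpose [DecidableEq n] {B : Matrix n k ℝ}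
    (hB : IsUnit (Bᵀ * B)) : Bᵀ * (1 - B * (Bᵀ * B)⁻¹ * Bᵀ) = 0 := by
  rw [Matrix.mul_sub, Matrix.mul_one, ← Matrix.mul_assoc, ← Matrix.mul_assoc,
    mul_nonsing_inv _ ((isUnit_iff_isUnit_det _).mp hB), Matrix.one_mul, sub_self]

lemma sq_l2_opNorm_sub_mul_inv_mul_transpose_le {m : Type*} [Fintype m] [DecidableEq n]
    {X : Matrix m n ℝ} {B : Matrix n k ℝ} (hB : IsUnit (Bᵀ * B)) {c : ℝ} (hc : 0 ≤ c)
    (h : ∀ w, w ᵥ* B = 0 → (X *ᵥ w) ⬝ᵥ (X *ᵥ w) ≤ c * (w ⬝ᵥ w)) :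
    ‖X - X * B * (Bᵀ * B)⁻¹ * Bᵀ‖ ^ 2 ≤ c := by
  set Q := 1 - B * (Bᵀ * B)⁻¹ * Bᵀ
  have hQ : ‖Q‖ ≤ 1 := ((isStarProjection_mul_inv_mul_transpose hB).one_sub).norm_le
  have hXQ : X - X * B * (Bᵀ * B)⁻¹ * Bᵀ = X * Q := by
    simp only [Q, Matrix.mul_sub, Matrix.mul_one, Matrix.mul_assoc]
  rw [hXQ]
  refine l2_opNorm_sq_le_of_forall hc fun z => ?_
  have hQz : (Q *ᵥ z) ᵥ* B = 0 := by
    rw [← mulVec_transpose, mulVec_mulVec, transpose_mul_one_sub_mul_inv_mul_transpose hB,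
      zero_mulVec]
  calc ((X * Q) *ᵥ z) ⬝ᵥ ((X * Q) *ᵥ z) = (X *ᵥ (Q *ᵥ z)) ⬝ᵥ (X *ᵥ (Q *ᵥ z)) := by
        rw [mulVec_mulVec]
    _ ≤ c * ((Q *ᵥ z) ⬝ᵥ (Q *ᵥ z)) := h _ hQz
    _ ≤ c * (‖Q‖ ^ 2 * (z ⬝ᵥ z)) := by gcongr; exact mulVec_dotProduct_mulVec_le Q z
    _ ≤ c * (z ⬝ᵥ z) := by
        gcongr
        exact mul_le_of_le_one_left (dotProduct_self_nonneg z) (pow_le_one₀ (norm_nonneg Q) hQ)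

end Projection

section BlockConstraint

variable {ι ι₁ ι₂ κ : Type*} [Fintype ι] [Fintype ι₁] [Fintype ι₂] [Fintype κ]
  [DecidableEq ι₁] [DecidableEq ι₂]

lemma mul_eq_neg_vecMul_of_vecMul_add_vecMul_eq_zero {W : Matrix ι₁ κ ℝ} {G : Matrix ι₂ κ ℝ}
    (hW : IsUnit (W * Wᵀ)) {d₁ : ι₁ → ℝ} (hd₁ : ∀ i, d₁ i ≠ 0) (d₂ : ι₂ → ℝ)
    {y₁ : ι₁ → ℝ} {y₂ : ι₂ → ℝ} (h : (d₁ ^ 2 * y₁) ᵥ* W + (d₂ ^ 2 * y₂) ᵥ* G = 0) :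
    d₁ * y₁ = -(y₂ ᵥ* (diagonal (d₂ ^ 2) * G * (Wᵀ * (W * Wᵀ)⁻¹) * (diagonal d₁)⁻¹)) := by
  have hinv : (diagonal d₁)⁻¹ = diagonal d₁⁻¹ := by
    refine inv_eq_left_inv ?_
    rw [diagonal_mul_diagonal, ← diagonal_one]
    congr 1; ext i; exact inv_mul_cancel₀ (hd₁ i)
  have hpinv : W * (Wᵀ * (W * Wᵀ)⁻¹) = 1 := by
    rw [← Matrix.mul_assoc, mul_nonsing_inv _ ((isUnit_iff_isUnit_det _).mp hW)]
  have hsolve : (d₂ ^ 2 * y₂) ᵥ* G ᵥ* (Wᵀ * (W * Wᵀ)⁻¹) = -(d₁ ^ 2 * y₁) := by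
    rw [eq_neg_of_add_eq_zero_right h, neg_vecMul, vecMul_vecMul, hpinv, vecMul_one]
  rw [← vecMul_vecMul, ← vecMul_vecMul, ← vecMul_vecMul y₂, vecMul_diagonal_eq_mul, mul_comm y₂,
    hsolve, hinv, neg_vecMul, vecMul_diagonal_eq_mul, neg_neg]
  ext i
  simp only [Pi.mul_apply, Pi.pow_apply, Pi.inv_apply]
  field_simp [hd₁ i]

lemma dotProduct_mul_self_le_of_vecMul_eq_zero (e : ι₁ ⊕ ι₂ ≃ ι) {A : Matrix ι κ ℝ}
    {W : Matrix ι₁ κ ℝ} (hWA : W = A.submatrix (fun i => e (.inl i)) id)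
    {G : Matrix ι₂ κ ℝ} (hGA : G = A.submatrix (fun i => e (.inr i)) id) (hW : IsUnit (W * Wᵀ))
    {d : ι → ℝ} (hd : ∀ i, d (e (.inl i)) ≠ 0) {y : ι → ℝ} (hy : (d ^ 2 * y) ᵥ* A = 0) :
    (d * y) ⬝ᵥ (d * y) ≤
      (‖diagonal ((fun i => d (e (.inr i))) ^ 2) * G * (Wᵀ * (W * Wᵀ)⁻¹) *
          (diagonal fun i => d (e (.inl i)))⁻¹‖ ^ 2 +
        ‖diagonal fun i => d (e (.inr i))‖ ^ 2) * (y ⬝ᵥ y) := by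
  subst hWA hGA
  rw [vecMul_eq_add_of_sumEquiv e] at hy
  have hblock := mul_eq_neg_vecMul_of_vecMul_add_vecMul_eq_zero hW hd _ hy
  rw [dotProduct_eq_add_of_sumEquiv e (d * y), dotProduct_eq_add_of_sumEquiv e y]
  have h₁ : (fun i => (d * y) (e (.inl i))) =
      (fun i => d (e (.inl i))) * fun i => y (e (.inl i)) := rfl
  have h₂ : (fun i => (d * y) (e (.inr i))) =
      diagonal (fun i => d (e (.inr i))) *ᵥ fun i => y (e (.inr i)) :=
    (diagonal_mulVec_eq_mul _ _).symm
  rw [h₁, h₂, hblock, neg_dotProduct, dotProduct_neg, neg_neg, add_mul]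
  have hy₂ := le_add_of_nonneg_left (a := (fun i => y (e (.inr i))) ⬝ᵥ fun i => y (e (.inr i)))
    (dotProduct_self_nonneg fun i => y (e (.inl i)))
  gcongr ?_ + ?_
  · exact (vecMul_dotProduct_vecMul_le _ _).trans (by gcongr)
  · exact (mulVec_dotProduct_mulVec_le _ _).trans (by gcongr)

end BlockConstraint

lemma transpose_submatrix_id_mul {α ι ι' κ : Type*} [NonUnitalNonAssocSemiring α] [Fintype ι]
    (V : Matrix ι ι α) (f : ι' → ι) (A : Matrix ι κ α) :
    (V.submatrix id f)ᵀ * A = (Vᵀ * A).submatrix f id := by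
  ext; simp [mul_apply]

section SingularValueDecomposition

variable {ι m κ : Type*} [Fintype ι] [Fintype m] [DecidableEq ι]

lemma conj_pow_of_transpose_mul_self_eq_one {α : Type*} [CommRing α] {V : Matrix ι ι α}
    (hV : Vᵀ * V = 1) (D : Matrix ι ι α) (j : ℕ) : (V * D * Vᵀ) ^ j = V * D ^ j * Vᵀ := by
  have hsemi : SemiconjBy V D (V * D * Vᵀ) := by
    rw [SemiconjBy, Matrix.mul_assoc _ Vᵀ, hV, Matrix.mul_one]
  rw [(hsemi.pow_right j).eq, Matrix.mul_assoc ((V * D * Vᵀ) ^ j), mul_eq_one_comm.mp hV,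
    Matrix.mul_one]

lemma transpose_mul_self_pow_of_svd {α : Type*} [CommRing α] {U : Matrix m ι α}
    {V : Matrix ι ι α} (hU : Uᵀ * U = 1) (hV : Vᵀ * V = 1) (lam : ι → α) (j : ℕ) :
    ((U * diagonal lam * Vᵀ)ᵀ * (U * diagonal lam * Vᵀ)) ^ j =
      V * diagonal (lam ^ (2 * j)) * Vᵀ := by
  have hXtX :
      (U * diagonal lam * Vᵀ)ᵀ * (U * diagonal lam * Vᵀ) = V * diagonal lam ^ 2 * Vᵀ := by
    simp only [transpose_mul, transpose_transpose, diagonal_transpose, Matrix.mul_assoc]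
    rw [← Matrix.mul_assoc Uᵀ, hU, Matrix.one_mul, ← Matrix.mul_assoc (diagonal lam), ← sq]
  rw [hXtX, conj_pow_of_transpose_mul_self_eq_one hV, ← pow_mul, diagonal_pow]

lemma pow_dotProduct_mulVec_le_of_vecMul_eq_zero {X U : Matrix m ι ℝ} {V : Matrix ι ι ℝ}
    {lam : ι → ℝ} (hU : Uᵀ * U = 1) (hV : Vᵀ * V = 1) (hX : X = U * diagonal lam * Vᵀ)
    {A₁ : Matrix ι κ ℝ} {j : ℕ} {R : ℝ}
    (hR : ∀ y, (lam ^ (2 * (j + 1)) * y) ᵥ* (Vᵀ * A₁) = 0 →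
      (lam ^ (j + 1) * y) ⬝ᵥ (lam ^ (j + 1) * y) ≤ R * (y ⬝ᵥ y))
    {w : ι → ℝ} (hw : w ᵥ* ((Xᵀ * X) ^ (j + 1) * A₁) = 0) :
    ((X *ᵥ w) ⬝ᵥ (X *ᵥ w)) ^ (j + 1) ≤ R * (w ⬝ᵥ w) ^ (j + 1) := by
  subst hX
  set y := w ᵥ* V with hy
  have hXw : (U * diagonal lam * Vᵀ) *ᵥ w = U *ᵥ (lam * y) := by
    rw [← mulVec_mulVec, ← mulVec_mulVec, mulVec_transpose, diagonal_mulVec_eq_mul]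
  have hyy : y ⬝ᵥ y = w ⬝ᵥ w := by
    rw [hy, ← mulVec_transpose]
    exact mulVec_dotProduct_mulVec_of_transpose_mul_self_eq_one
      (by rw [transpose_transpose, mul_eq_one_comm.mp hV]) w
  rw [transpose_mul_self_pow_of_svd hU hV, ← vecMul_vecMul, ← vecMul_vecMul, ← vecMul_vecMul,
    vecMul_diagonal_eq_mul, mul_comm y, vecMul_vecMul] at hw
  calc (((U * diagonal lam * Vᵀ) *ᵥ w) ⬝ᵥ ((U * diagonal lam * Vᵀ) *ᵥ w)) ^ (j + 1)
      = ((lam * y) ⬝ᵥ (lam * y)) ^ (j + 1) := by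
        rw [hXw, mulVec_dotProduct_mulVec_of_transpose_mul_self_eq_one hU]
    _ ≤ (y ⬝ᵥ y) ^ j * ((lam ^ (j + 1) * y) ⬝ᵥ (lam ^ (j + 1) * y)) :=
        pow_dotProduct_mul_self_le lam y j
    _ ≤ (y ⬝ᵥ y) ^ j * (R * (y ⬝ᵥ y)) := by
        have := dotProduct_self_nonneg y
        gcongr
        exact hR y hw
    _ = R * (w ⬝ᵥ w) ^ (j + 1) := by rw [hyy]; ring

end SingularValueDecomposition

end Matrix

theorem sq_l2_opNorm_sub_brp_le {m ι ι₁ ι₂ κ : Type*} [Fintype m] [Fintype ι] [Fintype ι₁]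
    [Fintype ι₂] [Fintype κ] [DecidableEq ι] [DecidableEq ι₁] [DecidableEq ι₂] [DecidableEq κ]
    (e : ι₁ ⊕ ι₂ ≃ ι) (j : ℕ) {X U : Matrix m ι ℝ} {V : Matrix ι ι ℝ} {lam : ι → ℝ}
    (hU : Uᵀ * U = 1) (hV : Vᵀ * V = 1) (hX : X = U * diagonal lam * Vᵀ)
    (hlam : ∀ i, lam (e (.inl i)) ≠ 0) (A₁ : Matrix ι κ ℝ) {B : Matrix ι κ ℝ}
    (hB : B = (Xᵀ * X) ^ (j + 1) * A₁) (hBinv : IsUnit (Bᵀ * B)) {W : Matrix ι₁ κ ℝ}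
    (hW : W = (V.submatrix id fun i => e (.inl i))ᵀ * A₁) (hWinv : IsUnit (W * Wᵀ)) :
    ‖X - X * B * (Bᵀ * B)⁻¹ * Bᵀ‖ ^ 2 ≤
      (‖(diagonal fun i => lam (e (.inr i))) ^ (2 * (j + 1)) *
            ((V.submatrix id fun i => e (.inr i))ᵀ * A₁) * (Wᵀ * (W * Wᵀ)⁻¹) *
            ((diagonal fun i => lam (e (.inl i))) ^ (j + 1))⁻¹‖ ^ 2 +
        ‖(diagonal fun i => lam (e (.inr i))) ^ (j + 1)‖ ^ 2) ^ ((1 : ℝ) / (j + 1)) := by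
  have hpow₂ : (diagonal fun i => lam (e (.inr i))) ^ (2 * (j + 1)) =
      diagonal ((fun i => (lam ^ (j + 1)) (e (.inr i))) ^ 2) := by
    rw [diagonal_pow, pow_mul']; rfl
  rw [hpow₂, diagonal_pow, diagonal_pow, transpose_submatrix_id_mul]
  refine sq_l2_opNorm_sub_mul_inv_mul_transpose_le hBinv (by positivity) fun w hw => ?_
  refine Real.le_rpow_one_div_mul_of_pow_le (dotProduct_self_nonneg _) (dotProduct_self_nonneg _)
    (by positivity) ?_
  refine pow_dotProduct_mulVec_le_of_vecMul_eq_zero hU hV hX (fun y hy => ?_) (hB ▸ hw)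
  exact dotProduct_mul_self_le_of_vecMul_eq_zero e (hW.trans (transpose_submatrix_id_mul _ _ _))
    rfl hWinv (fun i => pow_ne_zero _ (hlam i)) (by rwa [← pow_mul'])

/-- deterministic spectral-norm error bound for the power-scheme
BRP low-rank approximation. -/
theorem brp_power_scheme_deterministic_error_bound {m n r p : ℕ} (q : ℕ)
    (hr : r + 1 ≤ n)
    (X : Matrix (Fin m) (Fin n) ℝ)
    (U : Matrix (Fin m) (Fin n) ℝ) (V : Matrix (Fin n) (Fin n) ℝ)
    (lam : Fin n → ℝ)
    (hU : Uᵀ * U = 1) (hV : Vᵀ * V = 1)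
    (hpos : ∀ i : Fin n, (i : ℕ) < r → 0 < lam i)
    (hX : X = U * Matrix.diagonal lam * Vᵀ)
    (A₁ : Matrix (Fin n) (Fin (r + p)) ℝ)
    (B : Matrix (Fin n) (Fin (r + p)) ℝ) (hB : B = (Xᵀ * X) ^ (2 * q + 1) * A₁)
    (hBinv : IsUnit (Bᵀ * B))
    (L : Matrix (Fin m) (Fin n) ℝ) (hL : L = X * B * (Bᵀ * B)⁻¹ * Bᵀ)
    (W : Matrix (Fin r) (Fin (r + p)) ℝ)
    (hW : W = (V.submatrix id (fun i : Fin r => Fin.castLE (by omega) i))ᵀ * A₁)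
    (hWinv : IsUnit (W * Wᵀ)) :
    specNorm (X - L) ^ 2 ≤
      (specNorm
          ((Matrix.diagonal fun i : Fin (n - r) =>
              lam ⟨r + i.1, by have := i.2; omega⟩) ^ (2 * (2 * q + 1)) *
            ((V.submatrix id (fun i : Fin (n - r) =>
                (⟨r + i.1, by have := i.2; omega⟩ : Fin n)))ᵀ * A₁) *
            (Wᵀ * (W * Wᵀ)⁻¹) *
            ((Matrix.diagonal fun i : Fin r =>
                lam (Fin.castLE (by omega) i)) ^ (2 * q + 1))⁻¹) ^ 2 +
        specNorm ((Matrix.diagonal fun i : Fin (n - r) =>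
          lam ⟨r + i.1, by have := i.2; omega⟩) ^ (2 * q + 1)) ^ 2) ^
        ((1 : ℝ) / (2 * (q : ℝ) + 1)) := by
  -- This `e` sends `.inl i` to `Fin.castLE _ i` and `.inr i` to `⟨r + i, _⟩` definitionally, and
  -- `specNorm` is the `L2Operator` norm by definition.
  have hbound := sq_l2_opNorm_sub_brp_le
    (finSumFinEquiv.trans (finCongr (Nat.add_sub_cancel' (by omega : r ≤ n)))) (2 * q) hU hV hX
    (fun i => (hpos _ i.2).ne') A₁ hB hBinv hW hWinv
  rwa [show ((2 * q : ℕ) : ℝ) + 1 = 2 * (q : ℝ) + 1 by push_cast; ring, ← hL] at hbound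
end

section
/- Let P be an m×m real orthogonal projector (i.e., Pᵀ = P and P² = P), let A be an m×n real matrix, and let q be a nonnegative integer. Then ‖P A‖ ≤ ‖P (A Aᵀ)^q A‖^{1/(2q+1)}, where ‖·‖ is the spectral norm. -/
open Matrix

/-!
Put `R = √(A Aᵀ)`. The C⋆-identity `‖X‖² = ‖Xᴴ X‖` turns `‖P A‖` into `‖R P‖` and
`‖P (A Aᵀ)^q A‖` into `‖R^(2q+1) P‖`. For self-adjoint `R` the sequence `j ↦ ‖R^j P‖` is
log-convex, because `‖R^(j+1) P‖² = ‖(R^j P)ᴴ (R^(j+2) P)‖`; hence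
`‖R P‖^(k+1) ≤ ‖P‖^k ‖R^(k+1) P‖`, and `‖P‖ ≤ 1` for an orthogonal projector.
-/

open scoped MatrixOrder Matrix.Norms.L2Operator

theorem pow_succ_le_of_sq_le_mul {b : ℕ → ℝ} (hb : ∀ k, 0 ≤ b k)
    (hb_conv : ∀ k, b (k + 1) ^ 2 ≤ b k * b (k + 2)) (k : ℕ) :
    b 1 ^ (k + 1) ≤ b 0 ^ k * b (k + 1) := by
  -- `b 1 / b 0 ≤ b (k + 2) / b (k + 1)`, cleared of denominators so that zeros are harmless
  have ratio : ∀ k, b 1 * b (k + 1) ≤ b 0 * b (k + 2) := by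
    intro k
    induction k with
    | zero => simpa [sq] using hb_conv 0
    | succ k ih =>
      rcases (hb (k + 2)).eq_or_lt with h0 | hpos
      · rw [← h0, mul_zero]; exact mul_nonneg (hb 0) (hb _)
      · refine le_of_mul_le_mul_right ?_ hpos
        calc b 1 * b (k + 2) * b (k + 2) = b 1 * b (k + 2) ^ 2 := by ring
          _ ≤ b 1 * (b (k + 1) * b (k + 3)) := by gcongr; exacts [hb 1, hb_conv (k + 1)]
          _ = b 1 * b (k + 1) * b (k + 3) := by ring
          _ ≤ b 0 * b (k + 2) * b (k + 3) := by gcongr; exact hb _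
          _ = b 0 * b (k + 3) * b (k + 2) := by ring
  induction k with
  | zero => simp
  | succ k ih =>
    calc b 1 ^ (k + 2) = b 1 * b 1 ^ (k + 1) := by ring
      _ ≤ b 1 * (b 0 ^ k * b (k + 1)) := by gcongr; exact hb 1
      _ = b 0 ^ k * (b 1 * b (k + 1)) := by ring
      _ ≤ b 0 ^ k * (b 0 * b (k + 2)) :=
          mul_le_mul_of_nonneg_left (ratio k) (pow_nonneg (hb 0) k)
      _ = b 0 ^ (k + 1) * b (k + 2) := by ring

section CStarRing

variable {E : Type*} [NormedRing E] [StarRing E] [CStarRing E]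

theorem IsSelfAdjoint.norm_pow_succ_mul_sq_le {r : E} (hr : IsSelfAdjoint r) (c : E) (k : ℕ) :
    ‖r ^ (k + 1) * c‖ ^ 2 ≤ ‖r ^ k * c‖ * ‖r ^ (k + 2) * c‖ :=
  calc ‖r ^ (k + 1) * c‖ ^ 2 = ‖star c * (r ^ (k + 1) * r ^ (k + 1)) * c‖ := by
        rw [sq, ← CStarRing.norm_star_mul_self, star_mul, (hr.pow _).star_eq]
        simp only [mul_assoc]
    _ = ‖star (r ^ k * c) * (r ^ (k + 2) * c)‖ := by
        rw [← pow_add, show k + 1 + (k + 1) = k + (k + 2) by omega, pow_add, star_mul,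
          (hr.pow k).star_eq]
        simp only [mul_assoc]
    _ ≤ ‖r ^ k * c‖ * ‖r ^ (k + 2) * c‖ := by
        grw [norm_mul_le, norm_star]

theorem IsSelfAdjoint.norm_mul_pow_le {r : E} (hr : IsSelfAdjoint r) (c : E) (k : ℕ) :
    ‖r * c‖ ^ (k + 1) ≤ ‖c‖ ^ k * ‖r ^ (k + 1) * c‖ := by
  simpa using pow_succ_le_of_sq_le_mul (b := fun j ↦ ‖r ^ j * c‖) (fun _ ↦ norm_nonneg _)
    (hr.norm_pow_succ_mul_sq_le c) k

end CStarRing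

theorem specNorm_eq_l2_opNorm {m n : Type*} [Fintype m] [Fintype n] [DecidableEq n]
    (A : Matrix m n ℝ) : specNorm A = ‖A‖ := rfl

theorem Matrix.l2_opNorm_mul_eq_of_mul_conjTranspose_eq {𝕜 l m n k : Type*} [RCLike 𝕜]
    [Fintype l] [Fintype m] [Fintype n] [Fintype k] [DecidableEq l] [DecidableEq n]
    {A : Matrix m n 𝕜} {S : Matrix k m 𝕜} (hS : A * Aᴴ = Sᴴ * S) (B : Matrix l m 𝕜) :
    ‖B * A‖ = ‖S * Bᴴ‖ := by
  have : ‖B * A‖ * ‖B * A‖ = ‖S * Bᴴ‖ * ‖S * Bᴴ‖ := by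
    rw [← l2_opNorm_conjTranspose (B * A), ← l2_opNorm_conjTranspose_mul_self,
      ← l2_opNorm_conjTranspose_mul_self, conjTranspose_conjTranspose, conjTranspose_mul,
      conjTranspose_mul, conjTranspose_conjTranspose, Matrix.mul_assoc, ← Matrix.mul_assoc A,
      hS]
    simp only [Matrix.mul_assoc]
  exact (mul_self_inj (norm_nonneg _) (norm_nonneg _)).mp this

/-- for an orthogonal projector `P`,
`‖P A‖ ≤ ‖P (A Aᵀ)^q A‖^(1/(2q+1))`. -/
theorem projector_power_norm_le {m n : ℕ}
    (P : Matrix (Fin m) (Fin m) ℝ) (hPsymm : Pᵀ = P) (hPidem : P * P = P)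
    (A : Matrix (Fin m) (Fin n) ℝ) (q : ℕ) :
    specNorm (P * A) ≤
      specNorm (P * (A * Aᵀ) ^ q * A) ^ ((1 : ℝ) / (2 * (q : ℝ) + 1)) := by
  simp only [← conjTranspose_eq_transpose_of_trivial] at hPsymm ⊢
  set M := A * Aᴴ
  set R := CFC.sqrt M
  have hR : IsSelfAdjoint R := (CFC.sqrt_nonneg M).isSelfAdjoint
  have hR' : Rᴴ = R := hR
  have hRR : R * R = M := CFC.sqrt_mul_sqrt_self M (posSemidef_self_mul_conjTranspose A).nonneg
  have hM : Mᴴ = M := by simp only [M, conjTranspose_mul, conjTranspose_conjTranspose]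
  have hPA : specNorm (P * A) = ‖R * P‖ := by
    rw [specNorm_eq_l2_opNorm,
      l2_opNorm_mul_eq_of_mul_conjTranspose_eq (S := R) (by rw [hR', hRR]), hPsymm]
  have hPMA : specNorm (P * M ^ q * A) = ‖R ^ (2 * q + 1) * P‖ := by
    rw [specNorm_eq_l2_opNorm, Matrix.mul_assoc,
      l2_opNorm_mul_eq_of_mul_conjTranspose_eq (S := R ^ (2 * q + 1)), hPsymm]
    calc M ^ q * A * (M ^ q * A)ᴴ = M ^ q * M * M ^ q := by
          rw [conjTranspose_mul, conjTranspose_pow, hM]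
          simp only [M, Matrix.mul_assoc]
      _ = (R * R) ^ (2 * q + 1) := by rw [hRR, ← pow_succ, ← pow_add]; ring_nf
      _ = (R ^ (2 * q + 1))ᴴ * R ^ (2 * q + 1) := by
          rw [(Commute.refl R).mul_pow, conjTranspose_pow, hR']
  have hP : IsStarProjection P := ⟨hPidem, hPsymm⟩
  rw [hPA, hPMA, one_div,
    Real.le_rpow_inv_iff_of_pos (norm_nonneg _) (norm_nonneg _) (by positivity)]
  calc ‖R * P‖ ^ (2 * (q : ℝ) + 1) = ‖R * P‖ ^ (2 * q + 1) := by norm_cast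
    _ ≤ ‖P‖ ^ (2 * q) * ‖R ^ (2 * q + 1) * P‖ := hR.norm_mul_pow_le P (2 * q)
    _ ≤ ‖R ^ (2 * q + 1) * P‖ :=
      mul_le_of_le_one_left (norm_nonneg _) (pow_le_one₀ (norm_nonneg _) hP.norm_le)
end
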